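/- arXiv:1405.1497 — 5 statements merged into one kernel-verified Lean document; each statement's English description precedes it below -/
import Mathlib

section
/- Let F and θ be integers with 1 ≤ θ and F ≥ 4θ. Then W(F,θ) > 0, where W(F,θ) is the expected weight of an edge under the uniform product measure. -/
/-- `p F j` is the probability mass function of the Binomial(F,1/2) distribution. -/
def binomHalf (F j : ℕ) : ℚ := (F.choose j : ℚ) * (1/2) ^ F

/-- The expected weight `W (F,θ)` of an edge under the uniform product measure. -/
def expectedWeight (F θ : ℕ) : ℚ :=
  (∑ j ∈ Finset.range (θ + 1), (-(j : ℚ)) * binomHalf F j)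
    + ∑ j ∈ Finset.Icc (θ + 1) F,
        ((j : ℚ) + 2 * (1 - (j : ℚ) / (F : ℚ) - (θ : ℚ))) * binomHalf F j


/-! With `S = ∑_{j ≤ θ} p_j`, the mean `F / 2` of the binomial distribution turns `W` into
`W(F,θ) = (F/2 - 2θ) + (1 - 2S) + 2 ∑_{j ≤ θ} (θ - j + j/F) p_j`.
The first term is nonnegative because `4θ ≤ F`, the second because `θ < F/2` and the binomial
coefficients are symmetric, and the last sum is positive: its `j = 0` term is `θ 2^{-F}`. -/

open Finset

lemma two_mul_sum_range_choose_le_two_pow {F θ : ℕ} (h : 2 * θ < F) :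
    2 * ∑ j ∈ range (θ + 1), F.choose j ≤ 2 ^ F := by
  have hreflect : ∑ j ∈ range (θ + 1), F.choose j = ∑ j ∈ Ico (F - θ) (F + 1), F.choose j := by
    have := sum_Ico_reflect F.choose 0 (m := θ + 1) (n := F) (by omega)
    rw [Nat.add_sub_add_right, Nat.sub_zero, ← range_eq_Ico] at this
    rw [← this]
    refine sum_congr rfl fun j hj => ?_
    rw [Nat.choose_symm (by have := mem_range.mp hj; omega)]
  calc 2 * ∑ j ∈ range (θ + 1), F.choose j
      ≤ ∑ j ∈ range (F - θ), F.choose j + ∑ j ∈ Ico (F - θ) (F + 1), F.choose j := by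
        rw [two_mul, ← hreflect]
        exact add_le_add_left (sum_le_sum_of_subset (range_subset_range.mpr (by omega))) _
    _ = 2 ^ F := by rw [sum_range_add_sum_Ico _ (by omega), Nat.sum_range_choose]

lemma binomHalf_nonneg (F j : ℕ) : 0 ≤ binomHalf F j := by
  unfold binomHalf; positivity

lemma sum_range_binomHalf (F : ℕ) : ∑ j ∈ range (F + 1), binomHalf F j = 1 := by
  simp only [binomHalf, ← sum_mul]
  rw [← Nat.cast_sum, Nat.sum_range_choose]
  push_cast
  rw [← mul_pow]; norm_num

lemma sum_range_mul_binomHalf (F : ℕ) :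
    ∑ j ∈ range (F + 1), (j : ℚ) * binomHalf F j = F / 2 := by
  simp only [binomHalf, ← mul_assoc, ← sum_mul]
  have := congrArg (Nat.cast (R := ℚ)) (Nat.sum_range_mul_choose F)
  push_cast at this
  rw [this]
  rcases F with _ | n
  · simp
  · rw [Nat.add_sub_cancel, pow_succ, one_div_pow]
    field_simp

lemma sum_range_binomHalf_le_half {F θ : ℕ} (h : 2 * θ < F) :
    ∑ j ∈ range (θ + 1), binomHalf F j ≤ 1 / 2 := by
  have hchoose : 2 * ∑ j ∈ range (θ + 1), (F.choose j : ℚ) ≤ 2 ^ F := by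
    exact_mod_cast two_mul_sum_range_choose_le_two_pow h
  simp only [binomHalf]
  rw [← sum_mul, one_div_pow, mul_one_div, div_le_iff₀ (by positivity)]
  linarith

lemma expectedWeight_eq {F θ : ℕ} (hF : F ≠ 0) (hθF : θ ≤ F) :
    expectedWeight F θ = (F / 2 - 2 * θ) + (1 - 2 * ∑ j ∈ range (θ + 1), binomHalf F j)
      + 2 * ∑ j ∈ range (θ + 1), ((θ : ℚ) - j + j / F) * binomHalf F j := by
  have hmean : ∑ j ∈ range (F + 1), ((j : ℚ) + 2 * (1 - j / F - θ)) * binomHalf F j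
      = F / 2 + 1 - 2 * θ := by
    have hlin : ∀ j : ℕ, ((j : ℚ) + 2 * (1 - j / F - θ)) * binomHalf F j
        = (1 - 2 / F) * (j * binomHalf F j) + (2 - 2 * θ) * binomHalf F j := fun j => by ring
    simp only [hlin, sum_add_distrib, ← mul_sum, sum_range_mul_binomHalf, sum_range_binomHalf]
    field_simp
    ring
  have hlower : ∑ j ∈ range (θ + 1), (-(j : ℚ)) * binomHalf F j
      - ∑ j ∈ range (θ + 1), ((j : ℚ) + 2 * (1 - j / F - θ)) * binomHalf F j
      = -2 * ∑ j ∈ range (θ + 1), binomHalf F j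
        + 2 * ∑ j ∈ range (θ + 1), ((θ : ℚ) - j + j / F) * binomHalf F j := by
    rw [← sum_sub_distrib, mul_sum, mul_sum, ← sum_add_distrib]
    exact sum_congr rfl fun j _ => by ring
  rw [expectedWeight, ← Ico_add_one_right_eq_Icc, sum_Ico_eq_sub _ (by omega : θ + 1 ≤ F + 1), hmean]
  linarith

lemma sum_range_weighted_binomHalf_pos (F : ℕ) {θ : ℕ} (hθ : 1 ≤ θ) :
    0 < ∑ j ∈ range (θ + 1), ((θ : ℚ) - j + j / F) * binomHalf F j := by
  refine sum_pos' (fun j hj => mul_nonneg ?_ (binomHalf_nonneg F j)) ⟨0, by simp, ?_⟩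
  · have : (j : ℚ) ≤ θ := by exact_mod_cast Nat.lt_succ_iff.mp (mem_range.mp hj)
    have : (0 : ℚ) ≤ j / F := by positivity
    linarith
  · have hθpos : (0 : ℚ) < θ := by exact_mod_cast hθ
    simpa [binomHalf] using hθpos

theorem expectedWeight_pos_of_four_theta_le (F θ : ℕ) (hθ : 1 ≤ θ) (hF : 4 * θ ≤ F) :
    0 < expectedWeight F θ := by
  rw [expectedWeight_eq (by omega) (by omega)]
  have hθF : (4 * θ : ℚ) ≤ F := by exact_mod_cast hF
  have hlowerTail := sum_range_binomHalf_le_half (show 2 * θ < F by omega)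
  have hweighted := sum_range_weighted_binomHalf_pos F hθ
  linarith
end

section
/- Let θ be an integer with θ ≥ 2 and set F = 4θ − 1. Then W(F,θ) > 0, where W(F,θ) is the expected weight of an edge under the uniform product measure. -/
open Finset

/-- Mean of the binomial: `∑ j * C(n,j) = n * 2^n / 2` over `ℚ`. -/
lemma sum_mul_choose (n : ℕ) :
    ∑ j ∈ range (n+1), (j : ℚ) * (n.choose j : ℚ) = (n : ℚ) * 2 ^ n / 2 := by
  have h2 : ∑ j ∈ range (n+1), (n.choose j : ℚ) = 2 ^ n := by
    exact_mod_cast congrArg (Nat.cast (R := ℚ)) (Nat.sum_range_choose n)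
  have h1 : ∑ j ∈ range (n+1), (j : ℚ) * (n.choose j : ℚ)
      = ∑ j ∈ range (n+1), ((n : ℚ) - j) * (n.choose j : ℚ) := by
    rw [← Finset.sum_range_reflect (fun j => (j : ℚ) * (n.choose j : ℚ)) (n+1)]
    refine Finset.sum_congr rfl fun j hj => ?_
    have hj' : j ≤ n := by
      have := Finset.mem_range.mp hj; omega
    simp only [Nat.add_sub_cancel]
    rw [Nat.choose_symm hj', Nat.cast_sub hj']
  have h3 : 2 * ∑ j ∈ range (n+1), (j : ℚ) * (n.choose j : ℚ) = (n:ℚ) * 2 ^ n := by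
    rw [two_mul]
    nth_rewrite 2 [h1]
    rw [← Finset.sum_add_distrib]
    have : ∀ j ∈ range (n+1),
        (j : ℚ) * (n.choose j : ℚ) + ((n : ℚ) - j) * (n.choose j : ℚ)
          = (n : ℚ) * (n.choose j : ℚ) := fun j _ => by ring
    rw [Finset.sum_congr rfl this, ← Finset.mul_sum, h2]
  linarith

/-- `3 * C(4θ-1, θ) < 2^(4θ-2)` for `θ ≥ 2`. -/
lemma three_choose_lt (θ : ℕ) (hθ : 2 ≤ θ) :
    3 * Nat.choose (4*θ-1) θ < 2^(4*θ-2) := by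
  induction θ, hθ using Nat.le_induction with
  | base => decide
  | succ n hn ih =>
    have e1 : 4*(n+1)-1 = 4*n+3 := by omega
    have e2 : 4*(n+1)-2 = 4*n+2 := by omega
    rw [e1, e2]
    set c0 := (4*n-1).choose n with hc0
    set c1 := (4*n).choose n with hc1
    set c2 := (4*n+1).choose n with hc2
    set c3 := (4*n+2).choose n with hc3
    set c4 := (4*n+3).choose (n+1) with hc4
    have h1 : c0 * (4*n) = c1 * (3*n) := by
      have := Nat.choose_mul_succ_eq (4*n-1) n
      have e : 4*n-1+1 = 4*n := by omega
      rw [e] at this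
      have e' : 4*n - n = 3*n := by omega
      rw [e'] at this
      exact this
    have h2 : c1 * (4*n+1) = c2 * (3*n+1) := by
      have := Nat.choose_mul_succ_eq (4*n) n
      have e' : 4*n + 1 - n = 3*n+1 := by omega
      rw [e'] at this
      exact this
    have h3 : c2 * (4*n+2) = c3 * (3*n+2) := by
      have := Nat.choose_mul_succ_eq (4*n+1) n
      have e' : 4*n + 1 + 1 - n = 3*n+2 := by omega
      rw [e'] at this
      exact this
    have h4 : (4*n+3) * c3 = c4 * (n+1) := by
      have := Nat.add_one_mul_choose_eq (4*n+2) n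
      exact this
    -- key identity
    have key : c4 * ((n+1) * (3*n) * ((3*n+1) * (3*n+2)))
        = c0 * ((4*n) * ((4*n+1) * ((4*n+2) * (4*n+3)))) := by
      calc c4 * ((n+1) * (3*n) * ((3*n+1) * (3*n+2)))
          = (c4 * (n+1)) * ((3*n) * ((3*n+1) * (3*n+2))) := by ring
        _ = ((4*n+3) * c3) * ((3*n) * ((3*n+1) * (3*n+2))) := by rw [h4]
        _ = (c3 * (3*n+2)) * ((4*n+3) * ((3*n) * (3*n+1))) := by ring
        _ = (c2 * (4*n+2)) * ((4*n+3) * ((3*n) * (3*n+1))) := by rw [h3]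
        _ = (c2 * (3*n+1)) * ((4*n+2) * ((4*n+3) * (3*n))) := by ring
        _ = (c1 * (4*n+1)) * ((4*n+2) * ((4*n+3) * (3*n))) := by rw [h2]
        _ = (c1 * (3*n)) * ((4*n+1) * ((4*n+2) * (4*n+3))) := by ring
        _ = (c0 * (4*n)) * ((4*n+1) * ((4*n+2) * (4*n+3))) := by rw [h1]
        _ = c0 * ((4*n) * ((4*n+1) * ((4*n+2) * (4*n+3)))) := by ring
    have hM : 0 < (n+1) * (3*n) * ((3*n+1) * (3*n+2)) := by positivity
    have hpow : 2^(4*n+2) = 2^(4*n-2) * 16 := by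
      have : 4*n+2 = (4*n-2) + 4 := by omega
      rw [this, pow_add]; norm_num
    -- main estimate
    have hineq : (4*n) * ((4*n+1) * ((4*n+2) * (4*n+3)))
        ≤ 16 * ((n+1) * (3*n) * ((3*n+1) * (3*n+2))) := by nlinarith [sq_nonneg n]
    have ihh : 3 * c0 < 2^(4*n-2) := ih
    have final : 3 * c4 * ((n+1) * (3*n) * ((3*n+1) * (3*n+2)))
        < 2^(4*n+2) * ((n+1) * (3*n) * ((3*n+1) * (3*n+2))) := by
      calc 3 * c4 * ((n+1) * (3*n) * ((3*n+1) * (3*n+2)))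
          = 3 * (c0 * ((4*n) * ((4*n+1) * ((4*n+2) * (4*n+3))))) := by
            rw [← key]; ring
        _ = (3 * c0) * ((4*n) * ((4*n+1) * ((4*n+2) * (4*n+3)))) := by ring
        _ < 2^(4*n-2) * ((4*n) * ((4*n+1) * ((4*n+2) * (4*n+3)))) := by
            apply Nat.mul_lt_mul_of_lt_of_le ihh le_rfl
            positivity
        _ ≤ 2^(4*n-2) * (16 * ((n+1) * (3*n) * ((3*n+1) * (3*n+2)))) :=
            Nat.mul_le_mul_left _ hineq
        _ = 2^(4*n+2) * ((n+1) * (3*n) * ((3*n+1) * (3*n+2))) := by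
            rw [hpow]; ring
    exact Nat.lt_of_mul_lt_mul_right final

/-- Geometric-decay bound for the lower binomial tail. -/
lemma sum_choose_le (θ : ℕ) (hθ : 2 ≤ θ) : ∀ m, m ≤ θ →
    2 * ∑ j ∈ range (m+1), (4*θ-1).choose j ≤ 3 * (4*θ-1).choose m := by
  intro m
  induction m with
  | zero => simp
  | succ k ih =>
    intro hm
    have hk : k ≤ θ := by omega
    have step : 3 * (4*θ-1).choose k ≤ (4*θ-1).choose (k+1) := by
      have h := Nat.choose_succ_right_eq (4*θ-1) k
      have hd : 3*(k+1) ≤ (4*θ-1) - k := by omega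
      have h2 : (4*θ-1).choose k * (3*(k+1)) ≤ (4*θ-1).choose (k+1) * (k+1) := by
        rw [h]
        exact Nat.mul_le_mul_left _ hd
      have h3 : (3 * (4*θ-1).choose k) * (k+1) ≤ ((4*θ-1).choose (k+1)) * (k+1) := by
        calc (3 * (4*θ-1).choose k) * (k+1) = (4*θ-1).choose k * (3*(k+1)) := by ring
          _ ≤ _ := h2
      exact Nat.le_of_mul_le_mul_right h3 (by omega)
    have ih' := ih hk
    rw [Finset.sum_range_succ]
    omega

theorem expectedWeight_pos_boundary (θ : ℕ) (hθ : 2 ≤ θ) :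
    0 < expectedWeight (4 * θ - 1) θ := by
  set F := 4 * θ - 1 with hF
  have hFθ : F = 4*θ - 1 := hF
  have hFQ : (F : ℚ) = 4 * (θ:ℚ) - 1 := by
    rw [hF, Nat.cast_sub (by omega)]; push_cast; ring
  have hFpos : (0:ℚ) < (F:ℚ) := by
    rw [hFQ]
    have : (2:ℚ) ≤ (θ:ℚ) := by exact_mod_cast hθ
    linarith
  have hFne : (F : ℚ) ≠ 0 := ne_of_gt hFpos
  have hpow : (2:ℚ)^F * (1/2:ℚ)^F = 1 := by
    rw [← mul_pow]; norm_num
  set g : ℕ → ℚ := fun j => ((j:ℚ) + 2 * (1 - (j:ℚ)/(F:ℚ) - (θ:ℚ))) * binomHalf F j with hg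
  -- total sums
  have hC : ∑ j ∈ range (F+1), (F.choose j : ℚ) = 2 ^ F := by
    exact_mod_cast congrArg (Nat.cast (R := ℚ)) (Nat.sum_range_choose F)
  have hJC := sum_mul_choose F
  -- sum of g over all j equals 1/2
  have keyAll : ∑ j ∈ range (F+1), g j = 1/2 := by
    have hsplit : ∑ j ∈ range (F+1), g j
        = (1 - 2/(F:ℚ)) * (∑ j ∈ range (F+1), (j:ℚ) * (F.choose j : ℚ)) * (1/2:ℚ)^F
          + (2 - 2*(θ:ℚ)) * (∑ j ∈ range (F+1), (F.choose j : ℚ)) * (1/2:ℚ)^F := by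
      rw [Finset.mul_sum, Finset.mul_sum, Finset.sum_mul, Finset.sum_mul,
        ← Finset.sum_add_distrib]
      refine Finset.sum_congr rfl fun j _ => ?_
      simp only [hg, binomHalf]
      field_simp
      ring
    rw [hsplit, hJC, hC]
    have hθQ : (2:ℚ) ≤ (θ:ℚ) := by exact_mod_cast hθ
    calc (1 - 2/(F:ℚ)) * ((F:ℚ) * 2^F / 2) * (1/2:ℚ)^F
          + (2 - 2*(θ:ℚ)) * (2:ℚ)^F * (1/2:ℚ)^F
        = ((1 - 2/(F:ℚ)) * ((F:ℚ)/2) + (2 - 2*(θ:ℚ))) * ((2:ℚ)^F * (1/2:ℚ)^F) := by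
          ring
      _ = (1 - 2/(F:ℚ)) * ((F:ℚ)/2) + (2 - 2*(θ:ℚ)) := by rw [hpow, mul_one]
      _ = 1/2 := by
          rw [hFQ]
          have : (4*(θ:ℚ) - 1) ≠ 0 := by linarith
          field_simp
          ring
  -- split the Icc sum
  have hIcc : ∑ j ∈ Finset.Icc (θ+1) F, g j
      = ∑ j ∈ range (F+1), g j - ∑ j ∈ range (θ+1), g j := by
    have h := Finset.sum_range_add_sum_Ico g (show θ+1 ≤ F+1 by omega)
    rw [Finset.Ico_add_one_right_eq_Icc] at h
    linarith
  -- express W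
  have hW : expectedWeight F θ
      = 1/2 - ∑ j ∈ range (θ+1), (g j + (j:ℚ) * binomHalf F j) := by
    unfold expectedWeight
    rw [show (∑ j ∈ Finset.Icc (θ+1) F,
        ((j:ℚ) + 2 * (1 - (j:ℚ)/(F:ℚ) - (θ:ℚ))) * binomHalf F j)
        = ∑ j ∈ Finset.Icc (θ+1) F, g j from rfl, hIcc, keyAll,
      Finset.sum_add_distrib]
    have : ∑ j ∈ range (θ+1), (-(j:ℚ)) * binomHalf F j
        = -∑ j ∈ range (θ+1), (j:ℚ) * binomHalf F j := by
      rw [← Finset.sum_neg_distrib]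
      exact Finset.sum_congr rfl fun j _ => by ring
    rw [this]
    ring
  -- termwise bound
  have hterm : ∀ j ∈ range (θ+1),
      g j + (j:ℚ) * binomHalf F j ≤ 2 * binomHalf F j := by
    intro j hj
    have hj' : (j:ℚ) ≤ (θ:ℚ) := by
      have := Finset.mem_range.mp hj
      exact_mod_cast Nat.lt_succ_iff.mp this
    have hp : 0 ≤ binomHalf F j := by
      unfold binomHalf; positivity
    have hdiv : 0 ≤ (j:ℚ)/(F:ℚ) := by positivity
    have hcoef : (j:ℚ) + 2 * (1 - (j:ℚ)/(F:ℚ) - (θ:ℚ)) + (j:ℚ) ≤ 2 := by linarith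
    calc g j + (j:ℚ) * binomHalf F j
        = ((j:ℚ) + 2 * (1 - (j:ℚ)/(F:ℚ) - (θ:ℚ)) + (j:ℚ)) * binomHalf F j := by
          simp only [hg]; ring
      _ ≤ 2 * binomHalf F j := mul_le_mul_of_nonneg_right hcoef hp
  have hsumle : ∑ j ∈ range (θ+1), (g j + (j:ℚ) * binomHalf F j)
      ≤ 2 * ∑ j ∈ range (θ+1), binomHalf F j := by
    rw [Finset.mul_sum]
    exact Finset.sum_le_sum hterm
  -- tail bound
  have hQ : ∑ j ∈ range (θ+1), binomHalf F j < 1/4 := by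
    have hnat : 4 * ∑ j ∈ range (θ+1), F.choose j < 2^F := by
      have h1 := sum_choose_le θ hθ θ le_rfl
      have h2 := three_choose_lt θ hθ
      have hFe : 2^F = 2 * 2^(4*θ-2) := by
        rw [hFθ, ← pow_succ']
        congr 1
        omega
      rw [hFθ] at *
      omega
    have hrw : ∑ j ∈ range (θ+1), binomHalf F j
        = ((∑ j ∈ range (θ+1), F.choose j : ℕ) : ℚ) * (1/2:ℚ)^F := by
      unfold binomHalf
      rw [← Finset.sum_mul]
      congr 1
      push_cast
      rfl
    rw [hrw]
    have hS : ((∑ j ∈ range (θ+1), F.choose j : ℕ) : ℚ) < (2:ℚ)^F / 4 := by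
      have h4 : (4:ℚ) * ((∑ j ∈ range (θ+1), F.choose j : ℕ) : ℚ) < (2:ℚ)^F := by
        exact_mod_cast hnat
      linarith
    have hppos : (0:ℚ) < (1/2:ℚ)^F := by positivity
    calc ((∑ j ∈ range (θ+1), F.choose j : ℕ) : ℚ) * (1/2:ℚ)^F
        < ((2:ℚ)^F / 4) * (1/2:ℚ)^F := by
          exact mul_lt_mul_of_pos_right hS hppos
      _ = (1/4) * ((2:ℚ)^F * (1/2:ℚ)^F) := by ring
      _ = 1/4 := by rw [hpow, mul_one]
  rw [hW]
  linarith
end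

section
/- Let θ be an integer with θ ≥ 1 and set F = 4θ − 1. Then W(F,θ) ≥ 1/2 − 2·∑_{j=0}^{θ} p_j; equivalently, the expected weight is bounded below by 1/2 − 2·P(Z ≤ θ), where Z is a Binomial(F,1/2) random variable. -/
lemma sum_j_mul_choose (m : ℕ) :
    ∑ j ∈ Finset.range (m + 2), j * (m + 1).choose j = (m + 1) * 2 ^ m := by
  rw [Finset.sum_range_succ']
  simp only [Nat.zero_mul, Nat.add_zero]
  have h : ∀ k, (k + 1) * (m + 1).choose (k + 1) = (m + 1) * m.choose k := by
    intro k
    rw [Nat.mul_comm, ← Nat.add_one_mul_choose_eq m k]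
  calc ∑ k ∈ Finset.range (m + 1), (k + 1) * (m + 1).choose (k + 1)
      = ∑ k ∈ Finset.range (m + 1), (m + 1) * m.choose k := by
        exact Finset.sum_congr rfl fun k _ => h k
    _ = (m + 1) * ∑ k ∈ Finset.range (m + 1), m.choose k := by rw [Finset.mul_sum]
    _ = (m + 1) * 2 ^ m := by rw [Nat.sum_range_choose]

lemma sum_j_mul_choose_q (F : ℕ) (hF : 1 ≤ F) :
    ∑ j ∈ Finset.range (F + 1), (j : ℚ) * (F.choose j : ℚ) = (F : ℚ) * 2 ^ (F - 1) := by
  obtain ⟨m, rfl⟩ := Nat.exists_eq_add_of_le hF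
  have := sum_j_mul_choose m
  have h2 : (1 : ℕ) + m = m + 1 := by omega
  rw [h2]
  exact_mod_cast this

lemma sum_choose_q (F : ℕ) :
    ∑ j ∈ Finset.range (F + 1), (F.choose j : ℚ) = 2 ^ F := by
  exact_mod_cast Nat.sum_range_choose F

lemma sum_full (F θ : ℕ) (hF : 1 ≤ F) :
    ∑ j ∈ Finset.range (F + 1),
        ((j : ℚ) + 2 * (1 - (j : ℚ) / (F : ℚ) - (θ : ℚ))) * binomHalf F j
      = (F : ℚ) / 2 + 1 - 2 * θ := by
  have hF0 : (F : ℚ) ≠ 0 := by positivity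
  have step : ∀ j ∈ Finset.range (F + 1),
      ((j : ℚ) + 2 * (1 - (j : ℚ) / (F : ℚ) - (θ : ℚ))) * binomHalf F j
      = ((1 - 2 / (F : ℚ)) * ((j : ℚ) * (F.choose j : ℚ))
          + (2 - 2 * θ) * (F.choose j : ℚ)) * (1/2) ^ F := by
    intro j _
    unfold binomHalf
    field_simp
    ring
  rw [Finset.sum_congr rfl step]
  have : ∑ j ∈ Finset.range (F + 1),
      ((1 - 2 / (F : ℚ)) * ((j : ℚ) * (F.choose j : ℚ))
        + (2 - 2 * θ) * (F.choose j : ℚ)) * (1/2) ^ F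
      = ((1 - 2 / (F : ℚ)) * ((F : ℚ) * 2 ^ (F - 1))
          + (2 - 2 * θ) * 2 ^ F) * (1/2) ^ F := by
    rw [← Finset.sum_mul]
    congr 1
    rw [Finset.sum_add_distrib, ← Finset.mul_sum, ← Finset.mul_sum,
      sum_j_mul_choose_q F hF, sum_choose_q]
  rw [this]
  have hpow : (2 : ℚ) ^ (F - 1) * (1/2) ^ F = 1 / 2 := by
    obtain ⟨m, rfl⟩ := Nat.exists_eq_add_of_le hF
    have h2 : (1 : ℕ) + m = m + 1 := by omega
    rw [h2]
    simp only [Nat.add_sub_cancel, pow_succ]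
    rw [div_pow, one_pow]
    field_simp
  have hpow2 : (2 : ℚ) ^ F * (1/2) ^ F = 1 := by
    rw [div_pow, one_pow]
    field_simp
  have expand : ((1 - 2 / (F : ℚ)) * ((F : ℚ) * 2 ^ (F - 1))
      + (2 - 2 * θ) * 2 ^ F) * (1/2) ^ F
      = (1 - 2 / (F : ℚ)) * (F : ℚ) * ((2:ℚ) ^ (F - 1) * (1/2) ^ F)
        + (2 - 2 * θ) * ((2:ℚ) ^ F * (1/2) ^ F) := by ring
  rw [expand, hpow, hpow2]
  field_simp
  ring

theorem expectedWeight_ge_half_sub_tail (θ : ℕ) (hθ : 1 ≤ θ) :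
    1/2 - 2 * ∑ j ∈ Finset.range (θ + 1), binomHalf (4 * θ - 1) j
      ≤ expectedWeight (4 * θ - 1) θ := by
  set F := 4 * θ - 1 with hFdef
  have hF1 : 1 ≤ F := by omega
  have hθF : θ + 1 ≤ F + 1 := by omega
  have hFq : (F : ℚ) = 4 * θ - 1 := by
    have : (F : ℚ) = ((4 * θ - 1 : ℕ) : ℚ) := by rw [hFdef]
    rw [this]
    push_cast [Nat.cast_sub (by omega : 1 ≤ 4 * θ)]
    ring
  -- rewrite the Icc sum as a difference of range sums
  have hIcc : Finset.Icc (θ + 1) F = Finset.Ico (θ + 1) (F + 1) := by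
    rw [Finset.Ico_add_one_right_eq_Icc]
  have hsplit : ∑ j ∈ Finset.Icc (θ + 1) F,
      ((j : ℚ) + 2 * (1 - (j : ℚ) / (F : ℚ) - (θ : ℚ))) * binomHalf F j
      = (∑ j ∈ Finset.range (F + 1),
          ((j : ℚ) + 2 * (1 - (j : ℚ) / (F : ℚ) - (θ : ℚ))) * binomHalf F j)
        - ∑ j ∈ Finset.range (θ + 1),
          ((j : ℚ) + 2 * (1 - (j : ℚ) / (F : ℚ) - (θ : ℚ))) * binomHalf F j := by
    rw [hIcc, Finset.sum_Ico_eq_sub _ hθF]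
  have hfull := sum_full F θ hF1
  have hhalf : (F : ℚ) / 2 + 1 - 2 * θ = 1 / 2 := by rw [hFq]; ring
  -- termwise bound on the initial segment
  have hkey : ∑ j ∈ Finset.range (θ + 1),
      ((-(j : ℚ)) * binomHalf F j
        - ((j : ℚ) + 2 * (1 - (j : ℚ) / (F : ℚ) - (θ : ℚ))) * binomHalf F j)
      ≥ ∑ j ∈ Finset.range (θ + 1), (-2 : ℚ) * binomHalf F j := by
    apply Finset.sum_le_sum
    intro j hj
    have hj' : (j : ℚ) ≤ θ := by
      exact_mod_cast Nat.lt_succ_iff.mp (Finset.mem_range.mp hj)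
    have hp : 0 ≤ binomHalf F j := by unfold binomHalf; positivity
    have hx : 0 ≤ (j : ℚ) / (F : ℚ) := by positivity
    have hc : (-2 : ℚ) ≤ -(j : ℚ) - ((j : ℚ) + 2 * (1 - (j : ℚ) / (F : ℚ) - (θ : ℚ))) := by
      nlinarith
    nlinarith [mul_le_mul_of_nonneg_right hc hp]
  unfold expectedWeight
  rw [hsplit, hfull, hhalf]
  have e1 : ∑ j ∈ Finset.range (θ + 1),
      ((-(j : ℚ)) * binomHalf F j
        - ((j : ℚ) + 2 * (1 - (j : ℚ) / (F : ℚ) - (θ : ℚ))) * binomHalf F j)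
      = (∑ j ∈ Finset.range (θ + 1), (-(j : ℚ)) * binomHalf F j)
        - ∑ j ∈ Finset.range (θ + 1),
            ((j : ℚ) + 2 * (1 - (j : ℚ) / (F : ℚ) - (θ : ℚ))) * binomHalf F j := by
    rw [Finset.sum_sub_distrib]
  have e2 : ∑ j ∈ Finset.range (θ + 1), (-2 : ℚ) * binomHalf F j
      = -2 * ∑ j ∈ Finset.range (θ + 1), binomHalf F j := by
    rw [Finset.mul_sum]
  rw [e1, e2] at hkey
  linarith
end

section
/- Let Γ be a finite nonempty set and let ρ be a probability distribution on Γ with 0 < ρ(w) < 1 for every w ∈ Γ. Let (X_x)_{x ∈ ℕ} be an i.i.d. sequence with common distribution ρ, and for N ≥ 1 and u,v ∈ Γ set e_N(u,v) := card{x ∈ {0,1,…,N−1} : X_x = u and X_{x+1} = v}. Then there exist constants C < ∞, c > 0 and ε₀ > 0 (depending only on Γ and ρ) such that for every ε ∈ (0, ε₀), every N ≥ 1 and every pair u ≠ v in Γ, P(e_N(u,v) − N·ρ(u)·ρ(v) ∉ (−εN, εN)) ≤ C·exp(−c·N·ε²). -/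
/-! Write `e_N(u,v) - N ρ(u) ρ(v)` as the sum over `x < N` of the centred indicators `Y_x` of
`(X_x, X_{x+1}) = (u, v)`. Consecutive `Y_x` are dependent, but within one parity class they are
functions of disjoint blocks of the `X`'s, hence independent. Each `Y_x` takes values in an
interval of length `1`, so it is sub-Gaussian with parameter `1/4` (Hoeffding's lemma), and each
of the two parity sums is sub-Gaussian with parameter at most `N/4`. The Chernoff bound for both
sums at level `εN/2` and a union bound give the estimate with `C = 4` and `c = 1/2`. -/

open MeasureTheory ProbabilityTheory Real Finset
open scoped NNReal

namespace ProbabilityTheory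

namespace HasSubgaussianMGF

variable {Ω : Type*} {mΩ : MeasurableSpace Ω} {μ : Measure Ω} {X : Ω → ℝ} {c d : ℝ≥0}

lemma mono (h : HasSubgaussianMGF X c μ) (hcd : c ≤ d) : HasSubgaussianMGF X d μ where
  integrable_exp_mul := h.integrable_exp_mul
  mgf_le t := (h.mgf_le t).trans <| exp_le_exp.mpr <| by gcongr

lemma measureReal_abs_ge_le [IsFiniteMeasure μ] (h : HasSubgaussianMGF X c μ) {ε : ℝ}
    (hε : 0 ≤ ε) : μ.real {ω | ε ≤ |X ω|} ≤ 2 * exp (-ε ^ 2 / (2 * c)) := by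
  have hsplit : {ω | ε ≤ |X ω|} = {ω | ε ≤ X ω} ∪ {ω | ε ≤ (-X) ω} := by
    ext ω
    simp only [le_abs', Set.mem_ofPred_eq, Set.mem_union, Pi.neg_apply, le_neg]
    tauto
  calc μ.real {ω | ε ≤ |X ω|}
      ≤ μ.real {ω | ε ≤ X ω} + μ.real {ω | ε ≤ (-X) ω} := hsplit ▸ measureReal_union_le _ _
    _ ≤ exp (-ε ^ 2 / (2 * c)) + exp (-ε ^ 2 / (2 * c)) :=
        add_le_add (h.measure_ge_le hε) (h.neg.measure_ge_le hε)
    _ = 2 * exp (-ε ^ 2 / (2 * c)) := by ring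

lemma sum_of_indepFun_sum [IsZeroOrProbabilityMeasure μ] {ι : Type*} {Y : ι → Ω → ℝ}
    {s : Finset ι} (hY : ∀ i ∈ s, HasSubgaussianMGF (Y i) c μ)
    (hindep : ∀ a ∈ s, ∀ t ⊆ s, a ∉ t → IndepFun (Y a) (fun ω ↦ ∑ i ∈ t, Y i ω) μ) :
    HasSubgaussianMGF (fun ω ↦ ∑ i ∈ s, Y i ω) (#s * c) μ := by
  classical
  induction s using Finset.induction_on with
  | empty => simp [fun_zero]
  | insert a s ha ih =>
    have hs : HasSubgaussianMGF (fun ω ↦ ∑ i ∈ s, Y i ω) (#s * c) μ :=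
      ih (fun i hi ↦ hY i (mem_insert_of_mem hi))
        (fun b hb t ht hbt ↦ hindep b (mem_insert_of_mem hb) t (ht.trans (subset_insert a s)) hbt)
    have := (hY a (mem_insert_self a s)).add_of_indepFun hs
      (hindep a (mem_insert_self a s) s (subset_insert a s) ha)
    simpa [sum_insert ha, card_insert_of_notMem ha, add_mul, add_comm] using this

end HasSubgaussianMGF

lemma measureReal_abs_sum_ge_le_sum {Ω ι : Type*} {mΩ : MeasurableSpace Ω} {μ : Measure Ω}
    [IsFiniteMeasure μ] {s : Finset ι} (hs : s.Nonempty) (S : ι → Ω → ℝ) (δ : ℝ) :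
    μ.real {ω | #s * δ ≤ |∑ i ∈ s, S i ω|} ≤ ∑ i ∈ s, μ.real {ω | δ ≤ |S i ω|} := by
  refine (measureReal_mono (fun ω hω ↦ ?_) (measure_ne_top _ _)).trans
    (measureReal_biUnion_finset_le s fun i ↦ {ω | δ ≤ |S i ω|})
  simp only [Set.mem_iUnion, Set.mem_ofPred_eq, exists_prop]
  by_contra! hsmall
  refine (Set.mem_ofPred_eq ▸ hω).not_gt ?_
  calc |∑ i ∈ s, S i ω| ≤ ∑ i ∈ s, |S i ω| := abs_sum_le_sum_abs _ _
    _ < ∑ i ∈ s, δ := sum_lt_sum_of_nonempty hs hsmall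
    _ = #s * δ := by rw [sum_const, nsmul_eq_mul]

section PairSums

variable {Ω Γ : Type*} {mΩ : MeasurableSpace Ω} {μ : Measure Ω} [MeasurableSpace Γ]
  {X : ℕ → Ω → Γ}

lemma iIndepFun.indepFun_pair_sum_pair (hindep : iIndepFun X μ) (hX : ∀ x, Measurable (X x))
    {f : Γ × Γ → ℝ} (hf : Measurable f) {a : ℕ} {t : Finset ℕ}
    (hsep : ∀ x ∈ t, x + 2 ≤ a ∨ a + 2 ≤ x) :
    IndepFun (fun ω ↦ f (X a ω, X (a + 1) ω)) (fun ω ↦ ∑ x ∈ t, f (X x ω, X (x + 1) ω)) μ := by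
  classical
  set A : Finset ℕ := {a, a + 1}
  set B : Finset ℕ := t.biUnion fun x ↦ {x, x + 1}
  have hAB : Disjoint A B := by
    simp only [A, B, disjoint_left, mem_biUnion, mem_insert, mem_singleton]
    rintro y hy ⟨x, hx, hyx⟩
    have := hsep x hx
    omega
  have hleft : ∀ x ∈ t, x ∈ B := fun x hx ↦ mem_biUnion.mpr ⟨x, hx, by simp⟩
  have hright : ∀ x ∈ t, x + 1 ∈ B := fun x hx ↦ mem_biUnion.mpr ⟨x, hx, by simp⟩
  let g (F : A → Γ) : ℝ := f (F ⟨a, by simp [A]⟩, F ⟨a + 1, by simp [A]⟩)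
  let h (F : B → Γ) : ℝ := ∑ x ∈ t.attach, f (F ⟨x, hleft x x.2⟩, F ⟨x + 1, hright x x.2⟩)
  have hsum : (fun ω ↦ ∑ x ∈ t, f (X x ω, X (x + 1) ω)) = h ∘ fun ω (i : B) ↦ X i ω :=
    funext fun ω ↦ (sum_attach t fun x ↦ f (X x ω, X (x + 1) ω)).symm
  have hg : Measurable g := by fun_prop
  have hh : Measurable h := by fun_prop
  rw [hsum]
  exact (hindep.indepFun_finset A B hAB hX).comp hg hh

lemma hasSubgaussianMGF_sum_pair_of_pairwise [IsProbabilityMeasure μ] (hindep : iIndepFun X μ)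
    (hX : ∀ x, Measurable (X x)) {f : Γ × Γ → ℝ} (hf : Measurable f) {c : ℝ≥0} {s : Finset ℕ}
    (hs : (s : Set ℕ).Pairwise fun x y ↦ x + 2 ≤ y ∨ y + 2 ≤ x)
    (hY : ∀ x ∈ s, HasSubgaussianMGF (fun ω ↦ f (X x ω, X (x + 1) ω)) c μ) :
    HasSubgaussianMGF (fun ω ↦ ∑ x ∈ s, f (X x ω, X (x + 1) ω)) (#s * c) μ :=
  HasSubgaussianMGF.sum_of_indepFun_sum hY fun _ ha _ hts hat ↦
    hindep.indepFun_pair_sum_pair hX hf fun _ hx ↦ hs (hts hx) ha fun hxa ↦ hat (hxa ▸ hx)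

lemma pairwise_add_two_le_filter_mod_two (N r : ℕ) :
    (({x ∈ range N | x % 2 = r} : Finset ℕ) : Set ℕ).Pairwise
      fun x y ↦ x + 2 ≤ y ∨ y + 2 ≤ x := by
  intro x hx y hy hxy
  simp only [coe_filter, Set.mem_ofPred_eq] at hx hy
  omega

lemma hasSubgaussianMGF_sum_filter_mod_two [IsProbabilityMeasure μ] (hindep : iIndepFun X μ)
    (hX : ∀ x, Measurable (X x)) {f : Γ × Γ → ℝ} (hf : Measurable f) {c : ℝ≥0}
    (hY : ∀ x, HasSubgaussianMGF (fun ω ↦ f (X x ω, X (x + 1) ω)) c μ) (N r : ℕ) :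
    HasSubgaussianMGF (fun ω ↦ ∑ x ∈ range N with x % 2 = r, f (X x ω, X (x + 1) ω)) (N * c) μ :=
  (hasSubgaussianMGF_sum_pair_of_pairwise hindep hX hf (pairwise_add_two_le_filter_mod_two N r)
    fun x _ ↦ hY x).mono <| by
      gcongr
      exact_mod_cast (card_filter_le _ _).trans (card_range N).le

lemma measureReal_pair_preimage_singleton [MeasurableSingletonClass Γ] (hindep : iIndepFun X μ)
    {ρ : Γ → ℝ} (hρ : ∀ w, 0 ≤ ρ w) (hdist : ∀ x w, μ (X x ⁻¹' {w}) = ENNReal.ofReal (ρ w))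
    (x : ℕ) (u v : Γ) :
    μ.real ((fun ω ↦ (X x ω, X (x + 1) ω)) ⁻¹' {(u, v)}) = ρ u * ρ v := by
  have hpre : (fun ω ↦ (X x ω, X (x + 1) ω)) ⁻¹' {(u, v)} = X x ⁻¹' {u} ∩ X (x + 1) ⁻¹' {v} := by
    ext ω
    simp [Prod.ext_iff]
  rw [hpre, measureReal_def, (hindep.indepFun (by omega)).measure_inter_preimage_eq_mul _ _
    (measurableSet_singleton u) (measurableSet_singleton v), hdist, hdist,
    ENNReal.toReal_mul, ENNReal.toReal_ofReal (hρ u), ENNReal.toReal_ofReal (hρ v)]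

lemma hasSubgaussianMGF_indicator_pair_sub [IsProbabilityMeasure μ] [MeasurableSingletonClass Γ]
    (hindep : iIndepFun X μ) (hX : ∀ x, Measurable (X x)) {ρ : Γ → ℝ} (hρ : ∀ w, 0 ≤ ρ w)
    (hdist : ∀ x w, μ (X x ⁻¹' {w}) = ENNReal.ofReal (ρ w)) (x : ℕ) (u v : Γ) :
    HasSubgaussianMGF
      (fun ω ↦ ({(u, v)} : Set (Γ × Γ)).indicator 1 (X x ω, X (x + 1) ω) - ρ u * ρ v)
      (1 / 4) μ := by
  set E := (fun ω ↦ (X x ω, X (x + 1) ω)) ⁻¹' {(u, v)}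
  have hE : MeasurableSet E := ((hX x).prodMk (hX (x + 1))) (measurableSet_singleton _)
  have hmean : μ[E.indicator 1] = ρ u * ρ v := by
    rw [integral_indicator_one hE, measureReal_pair_preimage_singleton hindep hρ hdist]
  have hI := hasSubgaussianMGF_of_mem_Icc (a := 0) (b := 1) (μ := μ)
    (measurable_one.indicator hE).aemeasurable
    (ae_of_all _ fun ω ↦ ⟨Set.indicator_nonneg (fun _ _ ↦ zero_le_one) ω,
      Set.indicator_le_self' (fun _ _ ↦ zero_le_one) ω⟩)
  have hparam : (‖(1 : ℝ) - 0‖₊ / 2) ^ 2 = 1 / 4 := by norm_num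
  rwa [hmean, hparam] at hI

end PairSums

lemma card_filter_pair_sub_eq_sum {Γ : Type*} [DecidableEq Γ] (a : ℕ → Γ) (N : ℕ) (u v : Γ)
    (p : ℝ) :
    (#{x ∈ range N | a x = u ∧ a (x + 1) = v} : ℝ) - N * p
      = ∑ x ∈ range N, (({(u, v)} : Set (Γ × Γ)).indicator 1 (a x, a (x + 1)) - p) := by
  rw [sum_sub_distrib, sum_const, card_range, nsmul_eq_mul, natCast_card_filter]
  simp [Set.indicator_apply]

end ProbabilityTheory

theorem pair_count_large_deviations_general
    {Γ : Type*} [DecidableEq Γ]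
    [MeasurableSpace Γ] [MeasurableSingletonClass Γ]
    (ρ : Γ → ℝ) (hρ : ∀ w, 0 < ρ w ∧ ρ w < 1)
    {Ω : Type*} [MeasureSpace Ω] [IsProbabilityMeasure (ℙ : Measure Ω)]
    (X : ℕ → Ω → Γ) (hmeas : ∀ x, Measurable (X x))
    (hindep : iIndepFun X)
    (hdist : ∀ (x : ℕ) (u : Γ), ℙ (X x ⁻¹' {u}) = ENNReal.ofReal (ρ u)) :
    ∃ C c ε₀ : ℝ, 0 < c ∧ 0 < ε₀ ∧
      ∀ ε : ℝ, 0 < ε → ε < ε₀ → ∀ N : ℕ, 1 ≤ N → ∀ u v : Γ, u ≠ v →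
        ℙ {ω | ((((Finset.range N).filter
                (fun x => X x ω = u ∧ X (x + 1) ω = v)).card : ℝ)
                - (N : ℝ) * (ρ u * ρ v)) ∉ Set.Ioo (-(ε * N)) (ε * N)}
          ≤ ENNReal.ofReal (C * Real.exp (-c * N * ε ^ 2)) := by
  refine ⟨4, 1 / 2, 1, by norm_num, one_pos, fun ε hε _ N hN u v _ ↦ ?_⟩
  have hN0 : (N : ℝ) ≠ 0 := by positivity
  set f : Γ × Γ → ℝ := fun z ↦ ({(u, v)} : Set (Γ × Γ)).indicator 1 z - ρ u * ρ v
  set S : ℕ → Ω → ℝ := fun r ω ↦ ∑ x ∈ range N with x % 2 = r, f (X x ω, X (x + 1) ω)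
  have hf : Measurable f := (measurable_one.indicator (measurableSet_singleton _)).sub_const _
  have hY x := hasSubgaussianMGF_indicator_pair_sub hindep hmeas (fun w ↦ (hρ w).1.le) hdist x u v
  have hS : ∀ r, HasSubgaussianMGF (S r) (N * (1 / 4)) :=
    hasSubgaussianMGF_sum_filter_mod_two hindep hmeas hf hY N
  have htail : ∀ r, (ℙ : Measure Ω).real {ω | ε * N / 2 ≤ |S r ω|}
      ≤ 2 * exp (-(1 / 2) * N * ε ^ 2) := by
    intro r
    convert (hS r).measureReal_abs_ge_le (by positivity : 0 ≤ ε * N / 2) using 3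
    push_cast
    field_simp
    ring
  have hsub : {ω | ((#{x ∈ range N | X x ω = u ∧ X (x + 1) ω = v} : ℕ) : ℝ) - N * (ρ u * ρ v)
      ∉ Set.Ioo (-(ε * N)) (ε * N)} ⊆ {ω | #(range 2) * (ε * N / 2) ≤ |∑ r ∈ range 2, S r ω|} := by
    intro ω hω
    rw [Set.mem_ofPred_eq, card_filter_pair_sub_eq_sum (X · ω),
      ← sum_fiberwise_of_maps_to fun x _ ↦ mem_range.2 (Nat.mod_lt x two_pos), Set.mem_Ioo,
      ← abs_lt, not_lt] at hω
    rwa [Set.mem_ofPred_eq, card_range, Nat.cast_two, mul_div_cancel₀ _ two_ne_zero]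
  rw [← ofReal_measureReal]
  gcongr
  calc _ ≤ _ := measureReal_mono hsub (measure_ne_top _ _)
    _ ≤ ∑ r ∈ range 2, (ℙ : Measure Ω).real {ω | ε * N / 2 ≤ |S r ω|} :=
        measureReal_abs_sum_ge_le_sum (nonempty_range_iff.2 two_ne_zero) S _
    _ ≤ ∑ r ∈ range 2, 2 * exp (-(1 / 2) * N * ε ^ 2) := sum_le_sum fun r _ ↦ htail r
    _ = 4 * exp (-(1 / 2) * N * ε ^ 2) := by rw [sum_const, card_range]; ring

theorem pair_count_large_deviations
    {Γ : Type*} [Fintype Γ] [Nonempty Γ] [DecidableEq Γ]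
    [MeasurableSpace Γ] [MeasurableSingletonClass Γ]
    (ρ : Γ → ℝ) (hρ : ∀ w, 0 < ρ w ∧ ρ w < 1) (hsum : ∑ w, ρ w = 1)
    {Ω : Type*} [MeasureSpace Ω] [IsProbabilityMeasure (ℙ : Measure Ω)]
    (X : ℕ → Ω → Γ) (hmeas : ∀ x, Measurable (X x))
    (hindep : iIndepFun X)
    (hdist : ∀ (x : ℕ) (u : Γ), ℙ (X x ⁻¹' {u}) = ENNReal.ofReal (ρ u)) :
    ∃ C c ε₀ : ℝ, 0 < c ∧ 0 < ε₀ ∧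
      ∀ ε : ℝ, 0 < ε → ε < ε₀ → ∀ N : ℕ, 1 ≤ N → ∀ u v : Γ, u ≠ v →
        ℙ {ω | ((((Finset.range N).filter
                (fun x => X x ω = u ∧ X (x + 1) ω = v)).card : ℝ)
                - (N : ℝ) * (ρ u * ρ v)) ∉ Set.Ioo (-(ε * N)) (ε * N)}
          ≤ ENNReal.ofReal (C * Real.exp (-c * N * ε ^ 2)) :=
  pair_count_large_deviations_general ρ hρ X hmeas hindep hdist
end

section
/- Let F ≥ 1 be an integer, let ρ ∈ (0, 2^{−F}), and set a := 1/2 − (2^{F−1} − 1)·ρ. Let μ_ρ be the probability distribution on the hypercube {0,1}^F with μ_ρ(u_−) = μ_ρ(u_+) = a and μ_ρ(u) = ρ for u ∉ {u_−, u_+}, where u_− = (0,…,0) and u_+ = (1,…,1), and let X and Y be independent random elements of {0,1}^F, each with distribution μ_ρ. Then P(H(X,Y) = F) = 2a² + (2^F − 2)·ρ², and for every integer j with 1 ≤ j ≤ F − 1, P(H(X,Y) = j) = 4·(F choose j)·a·ρ + (2^F − 4)·(F choose j)·ρ². -/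
open MeasureTheory ProbabilityTheory Finset

def hammingDist' {F : ℕ} (u v : Fin F → Bool) : ℕ :=
  (Finset.univ.filter fun i => u i ≠ v i).card

noncomputable def biasedDist (F : ℕ) (ρ : ℝ) (u : Fin F → Bool) : ℝ :=
  if u = (fun _ => false) ∨ u = (fun _ => true) then
    1/2 - ((2 : ℝ) ^ (F - 1) - 1) * ρ
  else ρ

lemma hammingDist'_comm {F : ℕ} (u v : Fin F → Bool) :
    hammingDist' u v = hammingDist' v u := by
  unfold hammingDist'; congr 1; ext i; simp [ne_comm]

lemma hammingDist'_self {F : ℕ} (u : Fin F → Bool) : hammingDist' u u = 0 := by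
  simp [hammingDist']

lemma hammingDist'_bot_top {F : ℕ} :
    hammingDist' (fun _ => false : Fin F → Bool) (fun _ => true) = F := by
  simp [hammingDist']

lemma sphere_card (F k : ℕ) (u : Fin F → Bool) :
    ((univ : Finset (Fin F → Bool)).filter fun v => hammingDist' u v = k).card
      = F.choose k := by
  have h := Finset.card_powersetCard k (univ : Finset (Fin F))
  rw [Finset.card_univ, Fintype.card_fin] at h
  rw [← h]
  apply Finset.card_bij' (fun v _ => univ.filter fun i => u i ≠ v i)
      (fun s _ => fun i => if i ∈ s then !u i else u i)
  · intro v hv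
    simp only [mem_filter, mem_univ, true_and] at hv
    rw [Finset.mem_powersetCard]
    exact ⟨Finset.subset_univ _, hv⟩
  · intro s hs
    rw [Finset.mem_powersetCard] at hs
    simp only [mem_filter, mem_univ, true_and]
    unfold hammingDist'
    rw [← hs.2]
    congr 1
    ext i
    by_cases h : i ∈ s <;> simp [h]
  · intro v hv
    funext i
    by_cases h : u i ≠ v i <;> simp [h] <;> revert h <;> cases u i <;> cases v i <;> simp
  · intro s hs
    ext i
    by_cases h : i ∈ s <;> simp [h]

lemma sum_mu (F k : ℕ) (hF : 1 ≤ F) (hk : 1 ≤ k) (ρ : ℝ) :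
    ∑ p ∈ (univ : Finset ((Fin F → Bool) × (Fin F → Bool))).filter
        (fun p => hammingDist' p.1 p.2 = k),
      biasedDist F ρ p.1 * biasedDist F ρ p.2
    = (2:ℝ)^F * (F.choose k) * ρ^2
      + 4 * (F.choose k) * ((1/2 - ((2:ℝ)^(F-1) - 1) * ρ) - ρ) * ρ
      + (if k = F then 2 * ((1/2 - ((2:ℝ)^(F-1) - 1) * ρ) - ρ)^2 else 0) := by
  set z : Fin F → Bool := fun _ => false with hz
  set o : Fin F → Bool := fun _ => true with ho
  set c : ℝ := (1/2 - ((2:ℝ)^(F-1) - 1) * ρ) - ρ with hc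
  have hzo : z ≠ o := by
    intro h
    have := congrFun h ⟨0, hF⟩
    simp [hz, ho] at this
  set s : (Fin F → Bool) → ℝ :=
    fun u => (if u = z then c else 0) + (if u = o then c else 0) with hsdef
  have hbd : ∀ u, biasedDist F ρ u = ρ + s u := by
    intro u
    by_cases h1 : u = z
    · simp [biasedDist, h1, hsdef, hzo, hc, z, o]
    · by_cases h2 : u = o
      · simp [biasedDist, h2, hsdef, Ne.symm hzo, hc, z, o]
      · have : ¬(u = (fun _ => false) ∨ u = (fun _ => true)) := by
          push_neg; exact ⟨h1, h2⟩
        simp [biasedDist, this, hsdef, h1, h2]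
  -- inner sums of constants over spheres
  have inner_c : ∀ (u : Fin F → Bool) (c' : ℝ),
      (∑ v : Fin F → Bool, if hammingDist' u v = k then c' else 0)
        = (F.choose k : ℝ) * c' := by
    intro u c'
    rw [← Finset.sum_filter, Finset.sum_const, sphere_card]
    simp [mul_comm]
  have inner_c' : ∀ (v : Fin F → Bool) (c' : ℝ),
      (∑ u : Fin F → Bool, if hammingDist' u v = k then c' else 0)
        = (F.choose k : ℝ) * c' := by
    intro v c'
    have : ∀ u : Fin F → Bool, (if hammingDist' u v = k then c' else 0)
        = (if hammingDist' v u = k then c' else 0) := by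
      intro u; rw [hammingDist'_comm]
    simp only [this]
    exact inner_c v c'
  have key : ∀ u v : Fin F → Bool,
      (if hammingDist' u v = k then biasedDist F ρ u * biasedDist F ρ v else 0)
      = (if hammingDist' u v = k then ρ*ρ else 0)
        + ((if hammingDist' u v = k then s u * ρ else 0)
        + ((if hammingDist' u v = k then ρ * s v else 0)
        + (if hammingDist' u v = k then s u * s v else 0))) := by
    intro u v
    by_cases h : hammingDist' u v = k
    · rw [hbd u, hbd v]; simp only [h, if_pos]; ring
    · simp [h]
  rw [Finset.sum_filter, Fintype.sum_prod_type]
  simp only [key, Finset.sum_add_distrib]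
  have hT1 : (∑ u : Fin F → Bool, ∑ v : Fin F → Bool,
      if hammingDist' u v = k then ρ*ρ else 0) = (2:ℝ)^F * (F.choose k) * ρ^2 := by
    simp only [inner_c, Finset.sum_const, Finset.card_univ]
    rw [Fintype.card_fun]
    simp [Fintype.card_fin]
    push_cast
    ring
  have hsum_s : (∑ u : Fin F → Bool, s u) = 2 * c := by
    simp only [hsdef, Finset.sum_add_distrib, Finset.sum_ite_eq', Finset.mem_univ, if_pos]
    ring
  have hT2 : (∑ u : Fin F → Bool, ∑ v : Fin F → Bool,
      if hammingDist' u v = k then s u * ρ else 0)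
      = (F.choose k : ℝ) * (2 * c) * ρ := by
    simp only [inner_c]
    have : ∀ x : Fin F → Bool, (F.choose k:ℝ) * (s x * ρ) = ((F.choose k:ℝ) * ρ) * s x :=
      fun x => by ring
    simp only [this]
    rw [← Finset.mul_sum, hsum_s]
    ring
  have hT3 : (∑ u : Fin F → Bool, ∑ v : Fin F → Bool,
      if hammingDist' u v = k then ρ * s v else 0)
      = (F.choose k : ℝ) * (2 * c) * ρ := by
    rw [Finset.sum_comm]
    simp only [inner_c']
    have : ∀ x : Fin F → Bool, (F.choose k:ℝ) * (ρ * s x) = ((F.choose k:ℝ) * ρ) * s x :=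
      fun x => by ring
    simp only [this]
    rw [← Finset.mul_sum, hsum_s]
    ring
  have hg : ∀ u : Fin F → Bool,
      (∑ v : Fin F → Bool, if hammingDist' u v = k then s u * s v else 0)
      = s u * ((if hammingDist' u z = k then c else 0)
               + (if hammingDist' u o = k then c else 0)) := by
    intro u
    have : ∀ v : Fin F → Bool, (if hammingDist' u v = k then s u * s v else 0)
        = s u * ((if v = z then (if hammingDist' u z = k then c else 0) else 0)
               + (if v = o then (if hammingDist' u o = k then c else 0) else 0)) := by
      intro v
      by_cases hvz : v = z
      · subst hvz
        by_cases h : hammingDist' u z = k <;> simp [h, hsdef, hzo]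
      · by_cases hvo : v = o
        · subst hvo
          by_cases h : hammingDist' u o = k <;> simp [h, hsdef, Ne.symm hzo, hvz]
        · simp [hvz, hvo, hsdef]
    simp only [this, ← Finset.mul_sum]
    congr 1
    rw [Finset.sum_add_distrib]
    simp [Finset.sum_ite_eq']
  have hT4 : (∑ u : Fin F → Bool, ∑ v : Fin F → Bool,
      if hammingDist' u v = k then s u * s v else 0)
      = (if k = F then 2 * c^2 else 0) := by
    simp only [hg]
    have expand : ∀ u : Fin F → Bool,
        s u * ((if hammingDist' u z = k then c else 0)
               + (if hammingDist' u o = k then c else 0))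
        = (if u = z then c * ((if hammingDist' u z = k then c else 0)
               + (if hammingDist' u o = k then c else 0)) else 0)
        + (if u = o then c * ((if hammingDist' u z = k then c else 0)
               + (if hammingDist' u o = k then c else 0)) else 0) := by
      intro u
      by_cases h1 : u = z
      · simp [h1, hsdef, hzo]
      · by_cases h2 : u = o
        · simp [h2, hsdef, Ne.symm hzo]
        · simp [h1, h2, hsdef]
    simp only [expand, Finset.sum_add_distrib, Finset.sum_ite_eq', Finset.mem_univ, if_pos]
    have h1 : hammingDist' z z = 0 := hammingDist'_self z
    have h2 : hammingDist' o o = 0 := hammingDist'_self o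
    have h3 : hammingDist' z o = F := hammingDist'_bot_top
    have h4 : hammingDist' o z = F := by rw [hammingDist'_comm]; exact hammingDist'_bot_top
    rw [h1, h2, h3, h4]
    by_cases hkF : k = F
    · subst hkF
      have e0 : ¬ ((0:ℕ) = k) := by omega
      simp only [e0, if_false, if_pos rfl, if_true]
      ring
    · have e0 : ¬ ((0:ℕ) = k) := by omega
      have eF : ¬ (F = k) := fun h => hkF h.symm
      simp [e0, eF, hkF]
  rw [hT1, hT2, hT3, hT4]
  by_cases hkF : k = F
  · rw [if_pos hkF]; ring
  · rw [if_neg hkF]; ring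

lemma biasedDist_nonneg (F : ℕ) (hF : 1 ≤ F) (ρ : ℝ) (hρ0 : 0 < ρ)
    (hρ1 : ρ < 1 / 2 ^ F) (u : Fin F → Bool) : 0 ≤ biasedDist F ρ u := by
  have hQ : (0:ℝ) < 2 ^ F := by positivity
  have h3 : ρ * 2 ^ F < 1 := by
    rw [lt_div_iff₀ hQ] at hρ1; linarith
  have h2 : (2:ℝ) ^ (F - 1) * 2 = 2 ^ F := by
    rw [← pow_succ]; congr 1; omega
  have h4 : (2:ℝ) ^ (F-1) * ρ * 2 = 2 ^ F * ρ := by rw [← h2]; ring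
  unfold biasedDist
  split
  · nlinarith
  · linarith

lemma prob_eq_sum (F k : ℕ)
    {Ω : Type*} [MeasureSpace Ω]
    (X Y : Ω → (Fin F → Bool)) (hX : Measurable X) (hY : Measurable Y)
    (hXY : IndepFun X Y) :
    ℙ {ω | hammingDist' (X ω) (Y ω) = k}
      = ∑ p ∈ (univ : Finset ((Fin F → Bool) × (Fin F → Bool))).filter
          (fun p => hammingDist' p.1 p.2 = k),
        ℙ (X ⁻¹' {p.1}) * ℙ (Y ⁻¹' {p.2}) := by
  set Sk := (univ : Finset ((Fin F → Bool) × (Fin F → Bool))).filter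
      (fun p => hammingDist' p.1 p.2 = k) with hSk
  have hset : {ω | hammingDist' (X ω) (Y ω) = k}
      = ⋃ p ∈ Sk, (X ⁻¹' {p.1} ∩ Y ⁻¹' {p.2}) := by
    ext ω
    simp only [Set.mem_setOf_eq, Set.mem_iUnion, Finset.mem_coe, hSk,
      Finset.mem_filter, Finset.mem_univ, true_and, Set.mem_inter_iff,
      Set.mem_preimage, Set.mem_singleton_iff, exists_prop]
    constructor
    · intro h
      exact ⟨(X ω, Y ω), h, rfl, rfl⟩
    · rintro ⟨p, hp, hx, hy⟩
      rw [← hx, ← hy] at hp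
      exact hp
  have hdisj : (Sk : Set ((Fin F → Bool) × (Fin F → Bool))).PairwiseDisjoint
      (fun p => X ⁻¹' {p.1} ∩ Y ⁻¹' {p.2}) := by
    intro p _ q _ hpq
    rw [Function.onFun, Set.disjoint_left]
    rintro ω ⟨hx1, hy1⟩ ⟨hx2, hy2⟩
    apply hpq
    ext
    · rw [← hx1, ← hx2]
    · rw [← hy1, ← hy2]
  have hmeas : ∀ p ∈ Sk, MeasurableSet ((X ⁻¹' {p.1} ∩ Y ⁻¹' {p.2}) : Set Ω) :=
    fun p _ => (hX (measurableSet_singleton p.1)).inter (hY (measurableSet_singleton p.2))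
  rw [hset, measure_biUnion_finset hdisj hmeas]
  refine Finset.sum_congr rfl fun p _ => ?_
  exact hXY.measure_inter_preimage_eq_mul {p.1} {p.2}
    (measurableSet_singleton p.1) (measurableSet_singleton p.2)

theorem biased_hamming_distribution (F : ℕ) (hF : 1 ≤ F) (ρ : ℝ)
    (hρ0 : 0 < ρ) (hρ1 : ρ < 1 / 2 ^ F)
    {Ω : Type*} [MeasureSpace Ω] [IsProbabilityMeasure (ℙ : Measure Ω)]
    (X Y : Ω → (Fin F → Bool)) (hX : Measurable X) (hY : Measurable Y)
    (hXY : IndepFun X Y)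
    (hXdist : ∀ u, ℙ (X ⁻¹' {u}) = ENNReal.ofReal (biasedDist F ρ u))
    (hYdist : ∀ u, ℙ (Y ⁻¹' {u}) = ENNReal.ofReal (biasedDist F ρ u)) :
    ℙ {ω | hammingDist' (X ω) (Y ω) = F}
        = ENNReal.ofReal
            (2 * (1/2 - ((2 : ℝ) ^ (F - 1) - 1) * ρ) ^ 2 + ((2 : ℝ) ^ F - 2) * ρ ^ 2) ∧
      ∀ j : ℕ, 1 ≤ j → j ≤ F - 1 →
        ℙ {ω | hammingDist' (X ω) (Y ω) = j}
          = ENNReal.ofReal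
              (4 * (F.choose j : ℝ) * (1/2 - ((2 : ℝ) ^ (F - 1) - 1) * ρ) * ρ
                + ((2 : ℝ) ^ F - 4) * (F.choose j : ℝ) * ρ ^ 2) := by
  have hnn := biasedDist_nonneg F hF ρ hρ0 hρ1
  have h2 : (2:ℝ) ^ (F - 1) * 2 = 2 ^ F := by
    rw [← pow_succ]; congr 1; omega
  have key : ∀ k : ℕ, 1 ≤ k →
      ℙ {ω | hammingDist' (X ω) (Y ω) = k}
        = ENNReal.ofReal ((2:ℝ)^F * (F.choose k) * ρ^2
          + 4 * (F.choose k) * ((1/2 - ((2:ℝ)^(F-1) - 1) * ρ) - ρ) * ρ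
          + (if k = F then 2 * ((1/2 - ((2:ℝ)^(F-1) - 1) * ρ) - ρ)^2 else 0)) := by
    intro k hk
    rw [prob_eq_sum F k X Y hX hY hXY]
    have e1 : ∀ p ∈ (univ : Finset ((Fin F → Bool) × (Fin F → Bool))).filter
        (fun p => hammingDist' p.1 p.2 = k),
        ℙ (X ⁻¹' {p.1}) * ℙ (Y ⁻¹' {p.2})
          = ENNReal.ofReal (biasedDist F ρ p.1 * biasedDist F ρ p.2) := by
      intro p _
      rw [hXdist, hYdist, ← ENNReal.ofReal_mul (hnn p.1)]
    rw [Finset.sum_congr rfl e1,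
      ← ENNReal.ofReal_sum_of_nonneg (fun p _ => mul_nonneg (hnn p.1) (hnn p.2)),
      sum_mu F k hF hk ρ]
  constructor
  · rw [key F hF]
    congr 1
    rw [if_pos rfl, Nat.choose_self, ← h2]
    push_cast
    ring
  · intro j hj1 hj2
    have hjF : j ≠ F := by omega
    rw [key j hj1]
    congr 1
    rw [if_neg hjF, ← h2]
    ring
end
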